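/- Let c be an admissible coefficient function satisfying (Cubic values). Let i_1 ≠ i_2 and let γ = e_{i_1,j_1}+e_{i_1,j_1′}+e_{i_1,j_1″}+e_{i_2,1} ∈ ℤ^{μ_A−2}. If a_{i_1} ≥ 3 and j_1′ ≥ 2, then c(γ,0) = 0. -/

import Mathlib

/- Common framework: Frobenius manifolds for orbifold projective lines ℙ¹_A,
   following Ishibashi–Shiraishi–Takahashi. -/

namespace FrobeniusUniqueness

/-- A point index `(i, j)` labelling a flat coordinate `t_{i,j}`. -/
abbrev Pt : Type := Fin 3 × ℕ

/-- A non-negative element of `ℤ^{μ_A − 2}`: an exponent vector `α` with `α_{i,j} ∈ ℕ`. -/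
abbrev Expv : Type := Pt →₀ ℕ

/-- The standard basis vector `e_{i,j}`. -/
noncomputable def e (i : Fin 3) (j : ℕ) : Expv := Finsupp.single (i, j) 1

/-- The length `|α|` of an exponent vector. -/
def len (α : Expv) : ℕ := α.sum fun _ n => n

/-- A point index `(i,j)` is valid if `1 ≤ j ≤ a_i − 1`. -/
def ValidPt (A : Fin 3 → ℕ) (p : Pt) : Prop := 1 ≤ p.2 ∧ p.2 ≤ A p.1 - 1

/-- An exponent vector lies in `ℤ^{μ_A − 2}` iff it is supported on valid indices. -/
def Valid (A : Fin 3 → ℕ) (α : Expv) : Prop := ∀ p ∈ α.support, ValidPt A p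

/-- The combinatorial factor `s_{a,b,c}`. -/
def sFactor (a b c : ℕ) : ℂ :=
  if a = b ∧ b = c then 6
  else if a ≠ b ∧ b ≠ c ∧ a ≠ c then 1
  else 2

/-- The index type for the flat coordinates `t_1`, `t_{i,j}`, `t_{μ_A}`. -/
inductive Idx : Type where
  | one : Idx
  | pt : Fin 3 → ℕ → Idx
  | mu : Idx
deriving DecidableEq

/-- Validity of a flat coordinate index. -/
def ValidIdx (A : Fin 3 → ℕ) : Idx → Prop
  | .one => True
  | .pt i j => ValidPt A (i, j)
  | .mu => True

/-- The metric `η` in the frame `∂_1, ∂_{i,j}, ∂_{μ_A}`. -/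
noncomputable def eta (A : Fin 3 → ℕ) : Idx → Idx → ℂ
  | .one, .mu => 1
  | .mu, .one => 1
  | .pt i j, .pt i' j' =>
      if i = i' ∧ j + j' = A i ∧ 1 ≤ j ∧ j ≤ A i - 1 then (A i : ℂ)⁻¹ else 0
  | _, _ => 0

/-- The point indices occurring in an `Idx`. -/
def ptsOf : Idx → List Pt
  | .pt i j => [(i, j)]
  | _ => []

/-- The number of occurrences of `μ_A` in an `Idx`. -/
def muCount : Idx → ℕ
  | .mu => 1
  | _ => 0

/-- The factor produced when the monomial `t^{β + Σ_{p ∈ ps} e_p}` is differentiated by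
`∏_{p ∈ ps} ∂_p`, leaving the monomial `t^β`. -/
noncomputable def dfac (β : Expv) : List Pt → ℕ
  | [] => 1
  | p :: ps =>
      ((β + ((ps.map fun q => (Finsupp.single q 1 : Expv)).sum) + Finsupp.single p 1 : Expv) p)
        * dfac β ps

/-- `der A c a b d β m` is the coefficient of `t^β · e^{m·t_{μ_A}}` in `∂_a ∂_b ∂_d F`, where
`F = (1/2)t_1²t_{μ_A} + (1/2)t_1·Σ_{i,j}(1/a_i)t_{i,j}t_{i,a_i−j} + Σ_{α,m} c(α,m)t^α e^{m t_{μ_A}}`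
is the potential of the coefficient function `c`.  In particular `∂_1∂_a∂_b F = η(∂_a,∂_b)`. -/
noncomputable def der (A : Fin 3 → ℕ) (c : Expv → ℕ → ℂ) (a b d : Idx) (β : Expv) (m : ℕ) : ℂ :=
  if a = .one then (if β = 0 ∧ m = 0 then eta A b d else 0)
  else if b = .one then (if β = 0 ∧ m = 0 then eta A a d else 0)
  else if d = .one then (if β = 0 ∧ m = 0 then eta A a b else 0)
  else
    (m : ℂ) ^ (muCount a + muCount b + muCount d) *
      (dfac β (ptsOf a ++ ptsOf b ++ ptsOf d) : ℂ) *
      c (β + (((ptsOf a ++ ptsOf b ++ ptsOf d).map fun q => (Finsupp.single q 1 : Expv)).sum)) m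

/-- The coefficient of `t^β · e^{m·t_{μ_A}}` in
`Σ_{σ,τ} ∂_a∂_b∂_σF · η^{στ} · ∂_τ∂_d∂_e F`, where `(η^{στ})` is the inverse matrix of
`(η_{στ})` (so the only nonzero entries are `η^{1,μ_A} = η^{μ_A,1} = 1` and
`η^{(i,j),(i,a_i−j)} = a_i`). -/
noncomputable def quadTerm (A : Fin 3 → ℕ) (c : Expv → ℕ → ℂ) (a b d e' : Idx)
    (β : Expv) (m : ℕ) : ℂ :=
  ∑ x ∈ Finset.HasAntidiagonal.antidiagonal β, ∑ y ∈ Finset.HasAntidiagonal.antidiagonal m,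
    (der A c a b .one x.1 y.1 * der A c .mu d e' x.2 y.2
     + der A c a b .mu x.1 y.1 * der A c .one d e' x.2 y.2
     + ∑ i : Fin 3, ∑ j ∈ Finset.Icc 1 (A i - 1),
         (A i : ℂ) * der A c a b (.pt i j) x.1 y.1 * der A c (.pt i (A i - j)) d e' x.2 y.2)

/-- `χ_A = 1/a_1 + 1/a_2 + 1/a_3 − 1`. -/
noncomputable def chi (A : Fin 3 → ℕ) : ℚ := (A 0 : ℚ)⁻¹ + (A 1 : ℚ)⁻¹ + (A 2 : ℚ)⁻¹ - 1

/-- The degree of the monomial `t^α`: `Σ_{i,j} α_{i,j}·(a_i − j)/a_i`. -/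
noncomputable def deg (A : Fin 3 → ℕ) (α : Expv) : ℚ :=
  α.sum fun p n => (n : ℚ) * (((A p.1 : ℚ) - (p.2 : ℚ)) / (A p.1 : ℚ))

/-- A coefficient function is admissible if it satisfies (Homogeneity) and the WDVV
equations (coefficientwise, in the variables `t_{i,j}` and `e^{t_{μ_A}}`). -/
structure IsAdmissible (A : Fin 3 → ℕ) (c : Expv → ℕ → ℂ) : Prop where
  homog : ∀ α : Expv, Valid A α → ∀ m : ℕ, c α m ≠ 0 → deg A α + (m : ℚ) * chi A = 2
  wdvv : ∀ a b d e' : Idx, ValidIdx A a → ValidIdx A b → ValidIdx A d → ValidIdx A e' →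
      ∀ β : Expv, Valid A β → ∀ m : ℕ,
        quadTerm A c a b d e' β m = quadTerm A c a d b e' β m

/-- (Cubic values). -/
def CubicValues (A : Fin 3 → ℕ) (c : Expv → ℕ → ℂ) : Prop :=
  (∀ (i₁ i₂ i₃ : Fin 3) (j₁ j₂ j₃ : ℕ),
      ValidPt A (i₁, j₁) → ValidPt A (i₂, j₂) → ValidPt A (i₃, j₃) →
      ¬(i₁ = i₂ ∧ i₂ = i₃) → c (e i₁ j₁ + e i₂ j₂ + e i₃ j₃) 0 = 0) ∧
  (∀ (i : Fin 3) (j₁ j₂ j₃ : ℕ),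
      ValidPt A (i, j₁) → ValidPt A (i, j₂) → ValidPt A (i, j₃) →
      sFactor j₁ j₂ j₃ * c (e i j₁ + e i j₂ + e i j₃) 0 =
        if j₁ + j₂ + j₃ = A i then (A i : ℂ)⁻¹ else 0)

/-- (Normalization). -/
def Normalization (A : Fin 3 → ℕ) (c : Expv → ℕ → ℂ) : Prop :=
  (2 ≤ A 0 → c (e 0 1 + e 1 1 + e 2 1) 1 = 1) ∧
  (A 0 = 1 → A 0 < A 1 → c (e 1 1 + e 2 1) 1 = 1) ∧
  (A 0 = 1 → A 1 = 1 → A 1 < A 2 → c (e 2 1) 1 = 1) ∧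
  (A 0 = 1 → A 1 = 1 → A 2 = 1 → c 0 1 = 1)

/-- (Separation). -/
def Separation (A : Fin 3 → ℕ) (c : Expv → ℕ → ℂ) : Prop :=
  ∀ γ : Expv, Valid A γ →
    ∀ (i₁ i₂ : Fin 3) (j₁ j₂ : ℕ), i₁ ≠ i₂ → ValidPt A (i₁, j₁) → ValidPt A (i₂, j₂) →
      e i₁ j₁ + e i₂ j₂ ≤ γ → c γ 0 = 0

/-- The automorphism of `ℤ^{μ_A−2}` exchanging `e_{i₁,j}` and `e_{i₂,j}` for all `j`. -/
def swapExp (i₁ i₂ : Fin 3) (α : Expv) : Expv :=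
  Finsupp.equivMapDomain ((Equiv.swap i₁ i₂).prodCongr (Equiv.refl ℕ)) α

/-- (Symmetry). -/
def Symmetry (A : Fin 3 → ℕ) (c : Expv → ℕ → ℂ) : Prop :=
  ∀ i₁ i₂ : Fin 3, A i₁ = A i₂ → ∀ α : Expv, Valid A α → ∀ m : ℕ,
    c (swapExp i₁ i₂ α) m = c α m

/-
If `c(γ, 0) ≠ 0`, homogeneity forces `j₁ + j₁' + j₁'' ≥ a_{i₁} + 2`. At `m = 0` only the cubic
values enter the quadratic side of WDVV, and WDVV for `(∂_{i₁,1}, ∂_{i₁,k₂}, ∂_{i₁,k₁}, ∂_{i₂,1})`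
at the monomial `t_{i₁,k₃}` reads
  `D · c(e_{i₁,k₁} + e_{i₁,k₂+1} + e_{i₁,k₃} + e_{i₂,1})`
    `= [k₁ + 1 < a_{i₁}] · D' · c(e_{i₁,k₁+1} + e_{i₁,k₂} + e_{i₁,k₃} + e_{i₂,1})`
with `D, D' > 0`. So a unit can be moved onto `k₁` while keeping the sum, until `k₁ = a_{i₁} − 1`
where the right-hand side vanishes; this is an induction on `a_{i₁} − k₁`.
-/

section Coefficients

variable {A : Fin 3 → ℕ} {c : Expv → ℕ → ℂ}

lemma validPt_iff {i : Fin 3} {j : ℕ} : ValidPt A (i, j) ↔ 1 ≤ j ∧ j ≤ A i - 1 := Iff.rfl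

lemma valid_e {i : Fin 3} {j : ℕ} (h : ValidPt A (i, j)) : Valid A (e i j) := by
  intro p hp
  rw [e, Finsupp.mem_support_single] at hp
  exact hp.1 ▸ h

lemma Valid.add {α β : Expv} (hα : Valid A α) (hβ : Valid A β) : Valid A (α + β) := fun p hp =>
  (Finset.mem_union.mp (Finsupp.support_add hp)).elim (hα p) (hβ p)

lemma dfac_pos (β : Expv) (L : List Pt) : 0 < dfac β L := by
  induction L with
  | nil => simp [dfac]
  | cons p ps ih => exact Nat.mul_pos (by simp) ih

lemma dfac_zero_triple (i : Fin 3) (j j' j'' : ℕ) :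
    (dfac 0 [(i, j), (i, j'), (i, j'')] : ℂ) = sFactor j j' j'' := by
  simp only [dfac, List.map, List.sum_cons, List.sum_nil]
  simp [Finsupp.single_apply, sFactor, Prod.ext_iff]
  split_ifs <;> first | omega | norm_num

lemma der_pt_pt_pt (i i' i'' : Fin 3) (j j' j'' : ℕ) (β : Expv) (m : ℕ) :
    der A c (.pt i j) (.pt i' j') (.pt i'' j'') β m =
      dfac β [(i, j), (i', j'), (i'', j'')] * c (β + e i j + e i' j' + e i'' j'') m := by
  simp [der, muCount, ptsOf, e, add_assoc]

lemma der_mu_pt_pt_zero (i i' : Fin 3) (j j' : ℕ) (β : Expv) :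
    der A c .mu (.pt i j) (.pt i' j') β 0 = 0 := by
  simp [der, muCount]

lemma der_pt_pt_mu_zero (i i' : Fin 3) (j j' : ℕ) (β : Expv) :
    der A c (.pt i j) (.pt i' j') .mu β 0 = 0 := by
  simp [der, muCount]

lemma CubicValues.der_eq_zero (hcub : CubicValues A c) {i i' i'' : Fin 3} {j j' j'' : ℕ}
    (h : ValidPt A (i, j)) (h' : ValidPt A (i', j')) (h'' : ValidPt A (i'', j''))
    (hne : ¬(i = i' ∧ i' = i'')) :
    der A c (.pt i j) (.pt i' j') (.pt i'' j'') 0 0 = 0 := by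
  rw [der_pt_pt_pt, zero_add, hcub.1 i i' i'' j j' j'' h h' h'' hne, mul_zero]

lemma CubicValues.der_eq (hcub : CubicValues A c) {i : Fin 3} {j j' j'' : ℕ}
    (h : ValidPt A (i, j)) (h' : ValidPt A (i, j')) (h'' : ValidPt A (i, j'')) :
    der A c (.pt i j) (.pt i j') (.pt i j'') 0 0 =
      if j + j' + j'' = A i then (A i : ℂ)⁻¹ else 0 := by
  rw [der_pt_pt_pt, zero_add, dfac_zero_triple, hcub.2 i j j' j'' h h' h'']

lemma sum_antidiagonal_e {M : Type*} [AddCommMonoid M] (i : Fin 3) (j : ℕ)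
    (f : Expv × Expv → M) :
    ∑ x ∈ Finset.HasAntidiagonal.antidiagonal (e i j), f x = f (0, e i j) + f (e i j, 0) := by
  rw [e, Finsupp.antidiagonal_single, Finset.sum_map]
  simp [Finset.Nat.antidiagonal_succ]

/- At `t = 0` the only cubic derivative `∂_{i,k}∂_{i,p}∂_σF` that survives is
`σ = (i, a_i − k − p)`, with value `1/a_i`, which the factor `η^{στ} = a_i` cancels. -/
lemma CubicValues.quadTerm_pt_pt_pt_pt (hcub : CubicValues A c) {i i' i₀ : Fin 3} (hne : i ≠ i')
    {k p q l : ℕ} (r : ℕ) (hk : ValidPt A (i, k)) (hp : ValidPt A (i, p))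
    (hq : ValidPt A (i, q)) (hl : ValidPt A (i', l)) :
    quadTerm A c (.pt i k) (.pt i p) (.pt i q) (.pt i' l) (e i₀ r) 0 =
      if k + p < A i then der A c (.pt i (k + p)) (.pt i q) (.pt i' l) (e i₀ r) 0 else 0 := by
  have hcomp : ∀ {i'' : Fin 3} {j : ℕ}, j ∈ Finset.Icc 1 (A i'' - 1) →
      ValidPt A (i'', j) ∧ ValidPt A (i'', A i'' - j) := by
    intro i'' j hj
    rw [Finset.mem_Icc] at hj
    exact ⟨validPt_iff.mpr hj, validPt_iff.mpr (by omega)⟩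
  unfold quadTerm
  rw [sum_antidiagonal_e, Finset.Nat.antidiagonal_zero, Finset.sum_singleton,
    Finset.sum_singleton]
  simp only [der_mu_pt_pt_zero, der_pt_pt_mu_zero, mul_zero, zero_mul, zero_add, add_zero]
  have hsecond : ∀ i'' : Fin 3, ∀ j ∈ Finset.Icc 1 (A i'' - 1),
      (A i'' : ℂ) * der A c (.pt i k) (.pt i p) (.pt i'' j) (e i₀ r) 0 *
        der A c (.pt i'' (A i'' - j)) (.pt i q) (.pt i' l) 0 0 = 0 := fun i'' j hj => by
    rw [hcub.der_eq_zero (hcomp hj).2 hq hl (fun h => hne h.2), mul_zero]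
  rw [Finset.sum_eq_zero fun i'' _ => Finset.sum_eq_zero (hsecond i''), add_zero,
    Finset.sum_eq_single_of_mem i (Finset.mem_univ i) fun i'' _ hi'' =>
      Finset.sum_eq_zero fun j hj => by
        rw [hcub.der_eq_zero hk hp (hcomp hj).1 fun h => hi'' h.2.symm, mul_zero, zero_mul]]
  obtain ⟨⟨hk₁, hk₂⟩, ⟨hp₁, -⟩⟩ := And.intro (validPt_iff.mp hk) (validPt_iff.mp hp)
  have hA : (A i : ℂ) ≠ 0 := Nat.cast_ne_zero.mpr (by omega)
  refine (Finset.sum_congr rfl fun j hj => by rw [hcub.der_eq hk hp (hcomp hj).1]).trans ?_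
  split_ifs with hkp
  · rw [Finset.sum_eq_single_of_mem (A i - (k + p)) (by rw [Finset.mem_Icc]; omega)
      fun j _ hj => by rw [if_neg (by omega), mul_zero, zero_mul]]
    rw [if_pos (by omega), show A i - (A i - (k + p)) = k + p by omega, mul_inv_cancel₀ hA,
      one_mul]
  · refine Finset.sum_eq_zero fun j hj => ?_
    rw [if_neg (by have := Finset.mem_Icc.mp hj; omega), mul_zero, zero_mul]

lemma IsAdmissible.coeff_eq_zero_of_shift (hadm : IsAdmissible A c) (hcub : CubicValues A c)
    {i i' : Fin 3} (hne : i ≠ i') {k₁ k₂ k₃ l : ℕ} (h₁ : ValidPt A (i, k₁))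
    (h₂ : ValidPt A (i, k₂ + 1)) (h₃ : ValidPt A (i, k₃)) (hl : ValidPt A (i', l))
    (hk₂ : 1 ≤ k₂) (hshift : k₁ + 1 < A i → c (e i (k₁ + 1) + e i k₂ + e i k₃ + e i' l) 0 = 0) :
    c (e i k₁ + e i (k₂ + 1) + e i k₃ + e i' l) 0 = 0 := by
  obtain ⟨-, hk₂'⟩ := validPt_iff.mp h₂
  have h₂' : ValidPt A (i, k₂) := validPt_iff.mpr ⟨hk₂, by omega⟩
  have hone : ValidPt A (i, 1) := validPt_iff.mpr ⟨le_rfl, by omega⟩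
  have hw := hadm.wdvv (.pt i 1) (.pt i k₂) (.pt i k₁) (.pt i' l) hone h₂' h₁ hl (e i k₃)
    (valid_e h₃) 0
  rw [hcub.quadTerm_pt_pt_pt_pt hne k₃ hone h₂' h₁ hl,
    hcub.quadTerm_pt_pt_pt_pt hne k₃ hone h₁ h₂' hl, if_pos (by omega)] at hw
  have hrhs : (if 1 + k₁ < A i then
      der A c (.pt i (1 + k₁)) (.pt i k₂) (.pt i' l) (e i k₃) 0 else 0) = 0 := by
    split_ifs with hk₁
    · rw [der_pt_pt_pt, show e i k₃ + e i (1 + k₁) + e i k₂ + e i' l =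
          e i (k₁ + 1) + e i k₂ + e i k₃ + e i' l by rw [add_comm 1 k₁]; abel,
        hshift (by omega), mul_zero]
    · rfl
  rw [hrhs, der_pt_pt_pt, mul_eq_zero, Nat.cast_eq_zero] at hw
  rw [show e i k₁ + e i (k₂ + 1) + e i k₃ + e i' l = e i k₃ + e i (1 + k₂) + e i k₁ + e i' l by
    rw [add_comm 1 k₂]; abel]
  exact hw.resolve_left (dfac_pos _ _).ne'

theorem IsAdmissible.coeff_eq_zero_of_add_two_le (hadm : IsAdmissible A c)
    (hcub : CubicValues A c) {i i' : Fin 3} (hne : i ≠ i') {l : ℕ} (hl : ValidPt A (i', l))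
    {k₁ k₂ k₃ : ℕ} (h₁ : ValidPt A (i, k₁)) (h₂ : ValidPt A (i, k₂)) (h₃ : ValidPt A (i, k₃))
    (hsum : A i + 2 ≤ k₁ + k₂ + k₃) :
    c (e i k₁ + e i k₂ + e i k₃ + e i' l) 0 = 0 := by
  obtain ⟨hk₁, hk₁'⟩ := validPt_iff.mp h₁
  wlog two_le : 2 ≤ k₂ generalizing k₂ k₃
  · rw [add_right_comm (e i k₁)]
    exact this h₃ h₂ (by omega) (by omega)
  obtain ⟨-, hk₂⟩ := validPt_iff.mp h₂
  obtain ⟨k₂, rfl⟩ : ∃ k, k₂ = k + 1 := ⟨k₂ - 1, by omega⟩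
  refine hadm.coeff_eq_zero_of_shift hcub hne h₁ h₂ h₃ hl (by omega) fun hlt => ?_
  exact hadm.coeff_eq_zero_of_add_two_le hcub hne hl (validPt_iff.mpr ⟨by omega, by omega⟩)
    (validPt_iff.mpr ⟨by omega, by omega⟩) h₃ (by omega)
termination_by A i - k₁

lemma deg_add (α β : Expv) : deg A (α + β) = deg A α + deg A β :=
  Finsupp.sum_add_index' (fun _ => by simp) fun _ _ _ => by push_cast; ring

lemma deg_e (i : Fin 3) (j : ℕ) : deg A (e i j) = ((A i : ℚ) - j) / A i := by
  simp [deg, e]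

lemma add_two_le_of_mul_add_eq {a b k : ℕ} (ha : 3 ≤ a) (hb : 2 ≤ b)
    (h : k * b + a = 2 * a * b) : a + 2 ≤ k := by
  obtain rfl | hb : b = 2 ∨ 3 ≤ b := by omega
  · omega
  · nlinarith

lemma IsAdmissible.add_two_le_of_coeff_ne_zero (hadm : IsAdmissible A c) {i i' : Fin 3}
    {k₁ k₂ k₃ : ℕ} (ha : 3 ≤ A i) (h₁ : ValidPt A (i, k₁)) (h₂ : ValidPt A (i, k₂))
    (h₃ : ValidPt A (i, k₃)) (hl : ValidPt A (i', 1))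
    (hc : c (e i k₁ + e i k₂ + e i k₃ + e i' 1) 0 ≠ 0) : A i + 2 ≤ k₁ + k₂ + k₃ := by
  have hdeg := hadm.homog _ ((((valid_e h₁).add (valid_e h₂)).add (valid_e h₃)).add
    (valid_e hl)) 0 hc
  rw [Nat.cast_zero, zero_mul, add_zero, deg_add, deg_add, deg_add, deg_e, deg_e, deg_e,
    deg_e] at hdeg
  have hb : 2 ≤ A i' := by have := (validPt_iff.mp hl).2; omega
  have hA : (A i : ℚ) ≠ 0 := by positivity
  have hA' : (A i' : ℚ) ≠ 0 := by positivity
  field_simp at hdeg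
  refine add_two_le_of_mul_add_eq ha hb ?_
  exact_mod_cast (by push_cast at hdeg ⊢; linear_combination -hdeg :
    ((k₁ + k₂ + k₃ : ℕ) : ℚ) * A i' + A i = 2 * A i * A i')

end Coefficients

theorem step1_iii_case2_general (A : Fin 3 → ℕ)
    (c : Expv → ℕ → ℂ) (hadm : IsAdmissible A c) (hcub : CubicValues A c)
    (i₁ i₂ : Fin 3) (hne : i₁ ≠ i₂) (j₁ j₁' j₁'' : ℕ)
    (hv₁ : ValidPt A (i₁, j₁)) (hv₁' : ValidPt A (i₁, j₁'))
    (hv₁'' : ValidPt A (i₁, j₁'')) (hv₂ : ValidPt A (i₂, 1))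
    (ha₁ : 3 ≤ A i₁) :
    c (e i₁ j₁ + e i₁ j₁' + e i₁ j₁'' + e i₂ 1) 0 = 0 := by
  by_contra hc
  exact hc <| hadm.coeff_eq_zero_of_add_two_le hcub hne hv₂ hv₁ hv₁' hv₁''
    (hadm.add_two_le_of_coeff_ne_zero ha₁ hv₁ hv₁' hv₁'' hv₂ hc)

/-- Sub-Lemma (Step 1-(iii), Case 2). -/
theorem step1_iii_case2 (A : Fin 3 → ℕ) (hA : ∀ i, 1 ≤ A i) (hA01 : A 0 ≤ A 1) (hA12 : A 1 ≤ A 2)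
    (c : Expv → ℕ → ℂ) (hadm : IsAdmissible A c) (hcub : CubicValues A c)
    (i₁ i₂ : Fin 3) (hne : i₁ ≠ i₂) (j₁ j₁' j₁'' : ℕ)
    (hv₁ : ValidPt A (i₁, j₁)) (hv₁' : ValidPt A (i₁, j₁'))
    (hv₁'' : ValidPt A (i₁, j₁'')) (hv₂ : ValidPt A (i₂, 1))
    (ha₁ : 3 ≤ A i₁) (hj₁' : 2 ≤ j₁') :
    c (e i₁ j₁ + e i₁ j₁' + e i₁ j₁'' + e i₂ 1) 0 = 0 :=
  step1_iii_case2_general A c hadm hcub i₁ i₂ hne j₁ j₁' j₁'' hv₁ hv₁' hv₁'' hv₂ ha₁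

end FrobeniusUniqueness
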